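/- Let V be a real vector space of dimension 2m (with m ≥ 1) and let ω be a nondegenerate alternating bilinear form on V, regarded as an element of Λ²V*. Then the linear map ε(ω) : Λ^{m-1} V* → Λ^{m+1} V* given by exterior multiplication α ↦ ω ∧ α is a linear isomorphism. -/

import Mathlib

/-- The alternating `2`-form `(φ, ψ) ↦ φ(v)ψ(w) - ψ(v)φ(w)` on the dual space, used to
evaluate elements of `Λ² V*` against a pair of vectors `v, w ∈ V`. -/
noncomputable def evalPair {V : Type*} [AddCommGroup V] [Module ℝ V] (v w : V) :
    (Module.Dual ℝ V) [⋀^Fin 2]→ₗ[ℝ] ℝ :=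
  MultilinearMap.alternatization
    ((MultilinearMap.mkPiAlgebra ℝ (Fin 2) ℝ).compLinearMap
      ![Module.Dual.eval ℝ V v, Module.Dual.eval ℝ V w])

/-- Evaluation of an element of the exterior algebra of `V*` (thought of in degree `2`) against
a pair of vectors `v, w ∈ V`; this realizes an element of `Λ² V*` as a bilinear form on `V`. -/
noncomputable def asBilinForm {V : Type*} [AddCommGroup V] [Module ℝ V]
    (Ω : ExteriorAlgebra ℝ (Module.Dual ℝ V)) (v w : V) : ℝ :=
  ExteriorAlgebra.liftAlternating
    (fun i => match i with
      | 2 => evalPair v w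
      | _ => 0) Ω

/-!
Let `L = Ω ∧ ·` and let `D` be contraction with the bivector dual to `Ω`. The graded Leibniz
rule for contractions and the Euler identity `∑ₐ eₐ ∧ ι(eₐ*) = k` on `k`-forms give the `sl₂`
relation `[D, L] = 2m - 2k` on `Λᵏ`. Iterated, it shows that an `(m-1)`-form killed by `L`, or an
`(m+1)`-form killed by `D`, is zero: the other operator is nilpotent on it, and each step of the
descent has a nonzero coefficient. So `L : Λ^{m-1} → Λ^{m+1}` and `D : Λ^{m+1} → Λ^{m-1}` are
injective; hence `L ∘ D` is an injective, so surjective, endomorphism of the finite-dimensional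
`Λ^{m+1}`, and `L` is onto.
-/

namespace Module.End

/- `x` is a highest weight vector of weight `-1` for the `sl₂`-pair `(A / 2, B)`. The weights
`-(4i + 2)` are `[A, B] = ±(2m - 2k)` for `(A, B) = (D, L)` on `Λ^{m+1}` and `(L, D)` on
`Λ^{m-1}`, where `Bⁱ x` has degree `k = m + 1 + 2i`, resp. `k = m - 1 - 2i`. -/
theorem eq_zero_of_sl2_relation {K E : Type*} [Field K] [CharZero K] [AddCommGroup E]
    [Module K E] {A B : Module.End K E} {x : E} {N : ℕ} (hAx : A x = 0) (hBx : (B ^ N) x = 0)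
    (hAB : ∀ i < N, A (B ((B ^ i) x)) = B (A ((B ^ i) x)) - (4 * i + 2 : K) • (B ^ i) x) :
    x = 0 := by
  have hA_pow_succ : ∀ r < N, A ((B ^ (r + 1)) x) = -(2 * (r + 1) ^ 2 : K) • (B ^ r) x := by
    intro r
    induction r with
    | zero => intro h0; simpa [hAx] using hAB 0 h0
    | succ r ih =>
      intro hr
      rw [pow_succ', Module.End.mul_apply, hAB (r + 1) hr, ih (by omega), map_smul,
        ← Module.End.mul_apply, ← pow_succ']
      push_cast
      module
  suffices ∀ r ≤ N, (B ^ r) x = 0 → x = 0 from this N le_rfl hBx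
  intro r
  induction r with
  | zero => simp
  | succ r ih =>
    intro hr hzero
    have h := hA_pow_succ r (by omega)
    rw [hzero, map_zero, eq_comm, smul_eq_zero] at h
    exact ih (by omega) (h.resolve_left
      (neg_ne_zero.mpr (mul_ne_zero two_ne_zero (pow_ne_zero _ (Nat.cast_add_one_ne_zero r)))))

end Module.End

namespace ExteriorAlgebra

open CliffordAlgebra

section CommRing

variable {R M : Type*} [CommRing R] [AddCommGroup M] [Module R M]

theorem ι_mem_exteriorPower_one (a : M) : ι R a ∈ ⋀[R]^1 M := by
  simpa only [pow_one] using LinearMap.mem_range_self _ a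

theorem contractLeft_eq_zero_of_mem_exteriorPower_zero (u : Module.Dual R M)
    {x : ExteriorAlgebra R M} (hx : x ∈ ⋀[R]^0 M) : contractLeft u x = 0 := by
  rw [exteriorPower, pow_zero] at hx
  obtain ⟨r, rfl⟩ := Submodule.mem_one.mp hx
  exact contractLeft_algebraMap _ u r

theorem contractLeft_mem_exteriorPower (u : Module.Dual R M) {k : ℕ} {x : ExteriorAlgebra R M}
    (hx : x ∈ ⋀[R]^k M) : contractLeft u x ∈ ⋀[R]^(k - 1) M := by
  induction hx using Submodule.pow_induction_on_left' with
  | algebraMap r => simp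
  | add x y i _ _ hx hy => simpa using add_mem hx hy
  | mem_mul a ha i x hx ih =>
    obtain ⟨a, rfl⟩ := ha
    rw [contractLeft_ι_mul]
    refine sub_mem (by simpa using Submodule.smul_mem _ _ hx) ?_
    rcases i with _ | i
    · simp [contractLeft_eq_zero_of_mem_exteriorPower_zero u hx]
    · simpa [add_comm] using SetLike.GradedMul.mul_mem (ι_mem_exteriorPower_one a) ih

theorem contractLeft_mul_of_mem_exteriorPower (u : Module.Dual R M) {k : ℕ}
    {x : ExteriorAlgebra R M} (hx : x ∈ ⋀[R]^k M) (y : ExteriorAlgebra R M) :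
    contractLeft u (x * y) = contractLeft u x * y + (-1 : R) ^ k • (x * contractLeft u y) := by
  induction hx using Submodule.pow_induction_on_left' generalizing y with
  | algebraMap r => simp [Algebra.algebraMap_eq_smul_one]
  | add x x' i _ _ hx hx' => simp only [add_mul, map_add, hx, hx', smul_add]; abel
  | mem_mul a ha i x hx ih =>
    obtain ⟨a, rfl⟩ := ha
    rw [mul_assoc, contractLeft_ι_mul, contractLeft_ι_mul, ih, pow_succ]
    simp only [sub_mul, mul_add, smul_mul_assoc, mul_smul_comm, mul_assoc]
    module

theorem sum_ι_mul_contractLeft {I : Type*} [Fintype I] (w : I → M) (u : I → Module.Dual R M)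
    (hwu : ∀ f, ∑ a, u a f • w a = f) {k : ℕ} {x : ExteriorAlgebra R M} (hx : x ∈ ⋀[R]^k M) :
    ∑ a, ι R (w a) * contractLeft (u a) x = (k : R) • x := by
  induction hx using Submodule.pow_induction_on_left' with
  | algebraMap r => simp
  | add x y i _ _ hx hy => simp [mul_add, Finset.sum_add_distrib, hx, hy, smul_add]
  | mem_mul a ha i x hx ih =>
    obtain ⟨a, rfl⟩ := ha
    have hswap : ∀ b, ι R b * ι R a = -(ι R a * ι R b) := fun b =>
      eq_neg_of_add_eq_zero_left (ι_add_mul_swap b a)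
    simp only [contractLeft_ι_mul, mul_sub, mul_smul_comm, ← mul_assoc, hswap, neg_mul,
      sub_neg_eq_add, Finset.sum_add_distrib]
    have hlin : ∑ b, u b a • (ι R (w b) * x) = ι R a * x := by
      simp_rw [← smul_mul_assoc, ← map_smul, ← Finset.sum_mul, ← map_sum, hwu]
    have hrest : ∑ b, ι R a * ι R (w b) * contractLeft (u b) x = (i : R) • (ι R a * x) := by
      simp_rw [mul_assoc, ← Finset.mul_sum, ih, mul_smul_comm]
    rw [hlin, hrest, Nat.cast_succ, add_smul, one_smul, add_comm]

section DualLefschetz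

variable {I : Type*} [Fintype I] {Ω : ExteriorAlgebra R M} {J : Module.Dual R M ≃ₗ[R] M}

theorem apply_eq_neg_apply_of_contractLeft_eq_ι (hJ : ∀ u, contractLeft u Ω = ι R (J u))
    (u u' : Module.Dual R M) : u (J u') = -u' (J u) := by
  have h := contractLeft_comm (Q := 0) u u' Ω
  rw [hJ, hJ, contractLeft_ι, contractLeft_ι, ← map_neg] at h
  exact (algebraMap_leftInverse M).injective h

-- Contraction with the bivector dual to `Ω` when `J` is the isomorphism `u ↦ u ⌟ Ω`.
variable (b : Module.Basis I R M) (J) in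
noncomputable def dualLefschetz : Module.End R (ExteriorAlgebra R M) :=
  ∑ a, contractLeft (b.coord a) ∘ₗ contractLeft (J.symm (b a))

theorem dualLefschetz_apply (b : Module.Basis I R M) (x : ExteriorAlgebra R M) :
    dualLefschetz J b x = ∑ a, contractLeft (b.coord a) (contractLeft (J.symm (b a)) x) := by
  simp [dualLefschetz]

theorem dualLefschetz_mem (b : Module.Basis I R M) {k : ℕ} {x : ExteriorAlgebra R M}
    (hx : x ∈ ⋀[R]^k M) : dualLefschetz J b x ∈ ⋀[R]^(k - 2) M := by
  rw [dualLefschetz_apply]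
  exact Submodule.sum_mem _ fun a _ =>
    contractLeft_mem_exteriorPower _ (contractLeft_mem_exteriorPower _ hx)

theorem dualLefschetz_eq_zero (b : Module.Basis I R M) {k : ℕ} (hk : k < 2)
    {x : ExteriorAlgebra R M} (hx : x ∈ ⋀[R]^k M) : dualLefschetz J b x = 0 := by
  rw [dualLefschetz_apply]
  refine Finset.sum_eq_zero fun a _ => contractLeft_eq_zero_of_mem_exteriorPower_zero _ ?_
  simpa [show k - 1 = 0 by omega] using contractLeft_mem_exteriorPower (J.symm (b a)) hx

theorem dualLefschetz_mul (hΩ : Ω ∈ ⋀[R]^2 M) (hJ : ∀ u, contractLeft u Ω = ι R (J u))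
    (b : Module.Basis I R M) {k : ℕ} {x : ExteriorAlgebra R M} (hx : x ∈ ⋀[R]^k M) :
    dualLefschetz J b (Ω * x) =
      Ω * dualLefschetz J b x + ((Fintype.card I : R) - 2 * k) • x := by
  have hleib : ∀ u y, contractLeft u (Ω * y) = ι R (J u) * y + Ω * contractLeft u y := by
    intro u y
    rw [contractLeft_mul_of_mem_exteriorPower u hΩ, hJ, neg_one_sq, one_smul]
  have heuler : ∑ a, ι R (b a) * contractLeft (b.coord a) x = (k : R) • x :=
    sum_ι_mul_contractLeft _ _ (fun f => by simp [b.sum_repr f]) hx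
  have heuler' : ∑ a, ι R (-J (b.coord a)) * contractLeft (J.symm (b a)) x = (k : R) • x := by
    refine sum_ι_mul_contractLeft _ _ (fun f => ?_) hx
    obtain ⟨g, rfl⟩ := J.surjective f
    have hskew : ∀ a, J.symm (b a) (J g) = -g (b a) := fun a => by
      rw [apply_eq_neg_apply_of_contractLeft_eq_ι hJ, J.apply_symm_apply]
    simp_rw [hskew, neg_smul_neg, ← map_smul, ← map_sum, b.sum_dual_apply_smul_coord]
  have hcard : ∑ a, b.coord a (b a) • x = (Fintype.card I : R) • x := by
    simp [Finset.card_univ, Algebra.smul_def]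
  simp only [dualLefschetz_apply, hleib, J.apply_symm_apply, contractLeft_ι_mul, map_add,
    Finset.sum_add_distrib, Finset.sum_sub_distrib, ← Finset.mul_sum, hcard, heuler]
  simp only [map_neg, neg_mul, Finset.sum_neg_distrib] at heuler'
  rw [neg_eq_iff_eq_neg.mp heuler']
  module

theorem dualLefschetz_pow_mem (b : Module.Basis I R M) {k : ℕ} {x : ExteriorAlgebra R M}
    (hx : x ∈ ⋀[R]^k M) (i : ℕ) : (dualLefschetz J b ^ i) x ∈ ⋀[R]^(k - 2 * i) M := by
  induction i with
  | zero => simpa using hx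
  | succ i ih =>
    rw [pow_succ', Module.End.mul_apply]
    simpa [Nat.sub_sub, Nat.mul_succ] using dualLefschetz_mem b ih

end DualLefschetz

end CommRing

section Field

variable {K M : Type*} [Field K] [AddCommGroup M] [Module K M] [FiniteDimensional K M]

theorem exteriorPower_eq_bot_of_finrank_lt {k : ℕ} (hk : Module.finrank K M < k) :
    ⋀[K]^k M = ⊥ := by
  rw [← Submodule.finrank_eq_zero, exteriorPower.finrank_eq, Nat.choose_eq_zero_of_lt hk]

section Lefschetz

variable {m : ℕ} {Ω : ExteriorAlgebra K M} {J : Module.Dual K M ≃ₗ[K] M}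

local notation "D" => dualLefschetz J (Module.finBasis K M)

theorem dualLefschetz_finBasis_mul (hdim : Module.finrank K M = 2 * m) (hΩ : Ω ∈ ⋀[K]^2 M)
    (hJ : ∀ u, contractLeft u Ω = ι K (J u)) {k : ℕ} {x : ExteriorAlgebra K M}
    (hx : x ∈ ⋀[K]^k M) : D (Ω * x) = Ω * D x + (2 * m - 2 * k : K) • x := by
  have hn : (Module.finrank K M : K) = 2 * m := by rw [hdim, Nat.cast_mul, Nat.cast_ofNat]
  rw [dualLefschetz_mul hΩ hJ _ hx, Fintype.card_fin, hn]

variable [CharZero K]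

theorem eq_zero_of_dualLefschetz_eq_zero (hdim : Module.finrank K M = 2 * m)
    (hΩ : Ω ∈ ⋀[K]^2 M) (hJ : ∀ u, contractLeft u Ω = ι K (J u)) {y : ExteriorAlgebra K M}
    (hy : y ∈ ⋀[K]^(m + 1) M) (hDy : D y = 0) : y = 0 := by
  have hmem : ∀ i, (LinearMap.mulLeft K Ω ^ i) y ∈ ⋀[K]^(i • 2 + (m + 1)) M := fun i => by
    rw [LinearMap.pow_mulLeft, LinearMap.mulLeft_apply]
    exact SetLike.GradedMul.mul_mem (SetLike.pow_mem_graded i hΩ) hy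
  refine Module.End.eq_zero_of_sl2_relation (B := LinearMap.mulLeft K Ω) (N := m) hDy ?_
    fun i _ => ?_
  · have := hmem m
    rwa [exteriorPower_eq_bot_of_finrank_lt (by simp only [smul_eq_mul]; omega)] at this
  · rw [LinearMap.mulLeft_apply, LinearMap.mulLeft_apply,
      dualLefschetz_finBasis_mul hdim hΩ hJ (hmem i), smul_eq_mul]
    push_cast
    module

theorem eq_zero_of_mul_left_eq_zero (hm : 1 ≤ m) (hdim : Module.finrank K M = 2 * m)
    (hΩ : Ω ∈ ⋀[K]^2 M) (hJ : ∀ u, contractLeft u Ω = ι K (J u)) {x : ExteriorAlgebra K M}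
    (hx : x ∈ ⋀[K]^(m - 1) M) (hΩx : Ω * x = 0) : x = 0 := by
  refine Module.End.eq_zero_of_sl2_relation (A := LinearMap.mulLeft K Ω) (B := D)
    (N := (m - 1) / 2 + 1) hΩx ?_ fun i hi => ?_
  · rw [pow_succ', Module.End.mul_apply]
    exact dualLefschetz_eq_zero _ (by omega) (dualLefschetz_pow_mem _ hx _)
  · rw [LinearMap.mulLeft_apply, LinearMap.mulLeft_apply,
      dualLefschetz_finBasis_mul hdim hΩ hJ (dualLefschetz_pow_mem _ hx i)]
    have h2i : 2 * i ≤ m - 1 := by omega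
    push_cast [Nat.cast_sub h2i, Nat.cast_sub hm]
    module

theorem bijOn_mul_left_exteriorPower (hm : 1 ≤ m) (hdim : Module.finrank K M = 2 * m)
    (hΩ : Ω ∈ ⋀[K]^2 M) (hJ : ∀ u, contractLeft u Ω = ι K (J u)) :
    Set.BijOn (Ω * ·) (⋀[K]^(m - 1) M) (⋀[K]^(m + 1) M) := by
  have hmaps : Set.MapsTo (Ω * ·) (⋀[K]^(m - 1) M) (⋀[K]^(m + 1) M) := fun x hx => by
    simpa [show 2 + (m - 1) = m + 1 by omega] using SetLike.GradedMul.mul_mem hΩ hx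
  have hD : ∀ y ∈ ⋀[K]^(m + 1) M, D y ∈ ⋀[K]^(m - 1) M := fun y hy => by
    simpa using dualLefschetz_mem _ hy
  refine ⟨hmaps, fun x hx x' hx' h => ?_, fun y hy => ?_⟩
  · refine sub_eq_zero.mp (eq_zero_of_mul_left_eq_zero hm hdim hΩ hJ (sub_mem hx hx') ?_)
    simp only [mul_sub, show Ω * x = Ω * x' from h, sub_self]
  · let T := (LinearMap.mulLeft K Ω ∘ₗ D).restrict fun y hy => hmaps (hD y hy)
    have hT : Function.Injective T := (injective_iff_map_eq_zero T).mpr fun y hy => by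
      have hΩDy : Ω * D y = 0 := congrArg Subtype.val hy
      exact Subtype.ext (eq_zero_of_dualLefschetz_eq_zero hdim hΩ hJ y.2
        (eq_zero_of_mul_left_eq_zero hm hdim hΩ hJ (hD y y.2) hΩDy))
    obtain ⟨y', hy'⟩ := LinearMap.injective_iff_surjective.mp hT ⟨y, hy⟩
    exact ⟨D y', hD y' y'.2, congrArg Subtype.val hy'⟩

end Lefschetz

end Field

end ExteriorAlgebra

section asBilinForm

open CliffordAlgebra ExteriorAlgebra

variable {V : Type*} [AddCommGroup V] [Module ℝ V]

theorem asBilinForm_ι_mul_ι (a b : Module.Dual ℝ V) (v w : V) :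
    asBilinForm (ι ℝ a * ι ℝ b) v w = a v * b w - b v * a w := by
  rw [asBilinForm, liftAlternating_ι_mul, liftAlternating_ι,
    AlternatingMap.curryLeft_apply_apply]
  change evalPair v w ![a, b] = _
  have huniv : (Finset.univ : Finset (Equiv.Perm (Fin 2))) = {1, Equiv.swap 0 1} := by decide
  rw [evalPair, MultilinearMap.alternatization_apply, huniv,
    Finset.sum_insert (by decide), Finset.sum_singleton]
  simp [sub_eq_add_neg]

theorem algebraMap_asBilinForm {x : ExteriorAlgebra ℝ (Module.Dual ℝ V)}
    (hx : x ∈ ⋀[ℝ]^2 (Module.Dual ℝ V)) (v w : V) :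
    algebraMap ℝ _ (asBilinForm x v w) =
      contractLeft (Module.Dual.eval ℝ V w) (contractLeft (Module.Dual.eval ℝ V v) x) := by
  rw [exteriorPower, pow_two] at hx
  induction hx using Submodule.mul_induction_on' with
  | mem_mul_mem a ha b hb =>
    obtain ⟨a, rfl⟩ := ha
    obtain ⟨b, rfl⟩ := hb
    rw [asBilinForm_ι_mul_ι, contractLeft_ι_mul, contractLeft_ι, ← Algebra.commutes,
      ← Algebra.smul_def]
    conv_rhs => rw [map_sub, map_smul, map_smul, contractLeft_ι, contractLeft_ι]
    simp only [Module.Dual.eval_apply, Algebra.smul_def, map_sub, map_mul]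
  | add x _ y _ hx hy => simp only [asBilinForm, map_add] at hx hy ⊢; rw [hx, hy]

theorem contractLeft_eval_eq_ι_of_asBilinForm {x : ExteriorAlgebra ℝ (Module.Dual ℝ V)}
    (hx : x ∈ ⋀[ℝ]^2 (Module.Dual ℝ V)) {v : V} {φ : Module.Dual ℝ V}
    (hφ : ∀ w, asBilinForm x v w = φ w) :
    contractLeft (Module.Dual.eval ℝ V v) x = ι ℝ φ := by
  obtain ⟨ψ, hψ⟩ : contractLeft (Module.Dual.eval ℝ V v) x ∈ LinearMap.range (ι ℝ) := by
    simpa using contractLeft_mem_exteriorPower (Module.Dual.eval ℝ V v) hx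
  rw [← hψ]
  congr 1
  ext w
  apply (algebraMap_leftInverse (Module.Dual ℝ V)).injective
  rw [← hφ, algebraMap_asBilinForm hx, ← hψ, contractLeft_ι, Module.Dual.eval_apply]

end asBilinForm

theorem wedge_mul_middle_bijective_general {V : Type*} [AddCommGroup V] [Module ℝ V]
    [FiniteDimensional ℝ V] (m : ℕ) (hm : 1 ≤ m)
    (hdim : Module.finrank ℝ V = 2 * m)
    (ω : V →ₗ[ℝ] V →ₗ[ℝ] ℝ)
    (hnondeg : ∀ v : V, (∀ w : V, ω v w = 0) → v = 0)
    (Ω : ⋀[ℝ]^2 (Module.Dual ℝ V))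
    (hΩ : ∀ v w : V, asBilinForm (Ω : ExteriorAlgebra ℝ (Module.Dual ℝ V)) v w = ω v w) :
    Function.Injective (fun α : ⋀[ℝ]^(m - 1) (Module.Dual ℝ V) =>
      (Ω : ExteriorAlgebra ℝ (Module.Dual ℝ V)) * (α : ExteriorAlgebra ℝ (Module.Dual ℝ V)))
    ∧ ∀ γ : ⋀[ℝ]^(m + 1) (Module.Dual ℝ V), ∃ α : ⋀[ℝ]^(m - 1) (Module.Dual ℝ V),
      (Ω : ExteriorAlgebra ℝ (Module.Dual ℝ V)) * (α : ExteriorAlgebra ℝ (Module.Dual ℝ V))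
        = (γ : ExteriorAlgebra ℝ (Module.Dual ℝ V)) := by
  have hω : Function.Injective ω := (injective_iff_map_eq_zero ω).mpr fun v hv =>
    hnondeg v fun w => by rw [hv, LinearMap.zero_apply]
  let J : Module.Dual ℝ (Module.Dual ℝ V) ≃ₗ[ℝ] Module.Dual ℝ V :=
    (Module.evalEquiv ℝ V).symm ≪≫ₗ ω.linearEquivOfInjective hω Subspace.dual_finrank_eq.symm
  have hJ : ∀ u, CliffordAlgebra.contractLeft u (Ω : ExteriorAlgebra ℝ _) =
      ExteriorAlgebra.ι ℝ (J u) := by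
    intro u
    obtain ⟨v, rfl⟩ := (Module.evalEquiv ℝ V).surjective u
    simp only [J, LinearEquiv.trans_apply, LinearEquiv.symm_apply_apply,
      LinearMap.linearEquivOfInjective_apply]
    exact contractLeft_eval_eq_ι_of_asBilinForm Ω.2 (hΩ v)
  have hbij := ExteriorAlgebra.bijOn_mul_left_exteriorPower hm
    (Subspace.dual_finrank_eq.trans hdim) Ω.2 hJ
  refine ⟨fun α β h => Subtype.ext (hbij.injOn α.2 β.2 h), fun γ => ?_⟩
  obtain ⟨α, hα, hαγ⟩ := hbij.surjOn γ.2
  exact ⟨⟨α, hα⟩, hαγ⟩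

/-- if `dim V = 2m`, `m ≥ 1`, and `ω` is a nondegenerate alternating bilinear
form on `V` regarded as `Ω ∈ Λ²V*`, then exterior multiplication
`ε(ω) : Λ^{m-1} V* → Λ^{m+1} V*`, `α ↦ ω ∧ α`, is a linear isomorphism (it is injective and
onto `Λ^{m+1} V*`). -/
theorem wedge_mul_middle_bijective {V : Type*} [AddCommGroup V] [Module ℝ V]
    [FiniteDimensional ℝ V] (m : ℕ) (hm : 1 ≤ m)
    (hdim : Module.finrank ℝ V = 2 * m)
    (ω : V →ₗ[ℝ] V →ₗ[ℝ] ℝ)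
    (halt : ∀ v : V, ω v v = 0)
    (hnondeg : ∀ v : V, (∀ w : V, ω v w = 0) → v = 0)
    (Ω : ⋀[ℝ]^2 (Module.Dual ℝ V))
    (hΩ : ∀ v w : V, asBilinForm (Ω : ExteriorAlgebra ℝ (Module.Dual ℝ V)) v w = ω v w) :
    Function.Injective (fun α : ⋀[ℝ]^(m - 1) (Module.Dual ℝ V) =>
      (Ω : ExteriorAlgebra ℝ (Module.Dual ℝ V)) * (α : ExteriorAlgebra ℝ (Module.Dual ℝ V)))
    ∧ ∀ γ : ⋀[ℝ]^(m + 1) (Module.Dual ℝ V), ∃ α : ⋀[ℝ]^(m - 1) (Module.Dual ℝ V),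
      (Ω : ExteriorAlgebra ℝ (Module.Dual ℝ V)) * (α : ExteriorAlgebra ℝ (Module.Dual ℝ V))
        = (γ : ExteriorAlgebra ℝ (Module.Dual ℝ V)) :=
  wedge_mul_middle_bijective_general m hm hdim ω hnondeg Ω hΩ
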